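/- Let K be a field of characteristic zero and r a natural number. For each pair of finitely supported functions (α, β) ∈ (Fin r →₀ ℕ) × (Fin r →₀ ℕ), let E_{α,β} be the K-linear endomorphism of the polynomial ring K[s_1, …, s_r] given by f(s_1,…,s_r) ↦ s^α · f(s_1 − β_1, …, s_r − β_r), i.e. the composition of the iterated shift operators (each T_i substitutes s_i ↦ s_i − 1, applied β_i times) followed by multiplication by the monomial s_1^{α_1}⋯s_r^{α_r}. Then the family (E_{α,β}) indexed by all such pairs (α, β) is linearly independent over K. -/
import Mathlib


open MvPolynomial

/-- The `i`-th shift operator on `K[s_1, …, s_r]`: the `K`-algebra endomorphism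
substituting `s_i ↦ s_i - 1` and fixing the other variables. -/
noncomputable def shiftOp (K : Type*) [CommRing K] (r : ℕ) (i : Fin r) :
    MvPolynomial (Fin r) K →ₐ[K] MvPolynomial (Fin r) K :=
  aeval fun j : Fin r => if j = i then X i - 1 else X j

/-- Powers of the `i`-th shift operator substitute `s_i ↦ s_i - n`. -/
lemma shiftOp_pow (K : Type*) [CommRing K] (r : ℕ) (i : Fin r) (n : ℕ) :
    (shiftOp K r i) ^ n =
      aeval (fun j : Fin r => if j = i then X j - C (n : K) else X j) := by
  induction n with
  | zero =>
    rw [pow_zero]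
    refine MvPolynomial.algHom_ext fun j => ?_
    simp [AlgHom.one_apply]
  | succ n ih =>
    rw [pow_succ, ih]
    refine MvPolynomial.algHom_ext fun j => ?_
    rw [AlgHom.mul_apply]
    simp only [aeval_X, shiftOp]
    by_cases h : j = i
    · subst h
      simp only [Nat.cast_add, Nat.cast_one, map_add, map_one]
      simp
      ring
    · simp [h]

lemma list_prod_toLinearMap {R A : Type*} [CommSemiring R] [Semiring A] [Algebra R A]
    (l : List (A →ₐ[R] A)) :
    (l.map AlgHom.toLinearMap).prod = (l.prod).toLinearMap := by
  induction l with
  | nil => rfl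
  | cons a l ih =>
    rw [List.map_cons, List.prod_cons, List.prod_cons, ih]
    rfl

lemma pow_toLinearMap {R A : Type*} [CommSemiring R] [Semiring A] [Algebra R A]
    (f : A →ₐ[R] A) (n : ℕ) :
    (f.toLinearMap) ^ n = (f ^ n).toLinearMap := by
  induction n with
  | zero => rfl
  | succ n ih => rw [pow_succ, pow_succ, ih]; rfl

lemma shift_prod_list (K : Type*) [CommRing K] (r : ℕ) (d : Fin r → ℕ)
    (l : List (Fin r)) (hl : l.Nodup) :
    (l.map fun i => (shiftOp K r i) ^ d i).prod =
      aeval (fun j : Fin r => if j ∈ l then X j - C ((d j : K)) else X j) := by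
  induction l with
  | nil =>
    refine MvPolynomial.algHom_ext fun j => ?_
    simp [AlgHom.one_apply]
  | cons a l ih =>
    obtain ⟨ha, hl'⟩ := List.nodup_cons.mp hl
    rw [List.map_cons, List.prod_cons, ih hl', shiftOp_pow]
    refine MvPolynomial.algHom_ext fun j => ?_
    rw [AlgHom.mul_apply, aeval_X]
    by_cases hjl : j ∈ l
    · have hja : j ≠ a := fun h => ha (h ▸ hjl)
      simp [hjl, hja, List.mem_cons]
    · by_cases hja : j = a
      · subst hja
        simp [hjl, List.mem_cons]
      · simp [hjl, hja, List.mem_cons]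

/-- The iterated shift operator `T^β = T_1^{β 1} ∘ ⋯ ∘ T_r^{β r}`, sending
`f(s_1, …, s_r)` to `f(s_1 - β 1, …, s_r - β r)`. -/
noncomputable def shiftPow (K : Type*) [CommRing K] (r : ℕ) (β : Fin r →₀ ℕ) :
    Module.End K (MvPolynomial (Fin r) K) :=
  (List.ofFn fun i : Fin r => ((shiftOp K r i).toLinearMap) ^ (β i)).prod

lemma shiftPow_eq (K : Type*) [CommRing K] (r : ℕ) (β : Fin r →₀ ℕ) :
    shiftPow K r β = (aeval fun j : Fin r => X j - C ((β j : K))).toLinearMap := by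
  unfold shiftPow
  have h1 : (List.ofFn fun i : Fin r => ((shiftOp K r i).toLinearMap) ^ (β i)) =
      (List.ofFn fun i : Fin r => (shiftOp K r i) ^ (β i)).map AlgHom.toLinearMap := by
    rw [List.map_ofFn]
    congr 1
    funext i
    exact pow_toLinearMap _ _
  rw [h1, list_prod_toLinearMap, List.ofFn_eq_map,
    shift_prod_list K r (fun i => β i) _ (List.nodup_finRange r)]
  congr 1
  refine MvPolynomial.algHom_ext fun j => ?_
  simp [List.mem_finRange]

lemma exists_indicator (K : Type*) [Field K] {r : ℕ} (B : Finset (Fin r → K))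
    (y : Fin r → K) :
    ∃ p : MvPolynomial (Fin r) K, eval y p = 1 ∧ ∀ z ∈ B, z ≠ y → eval z p = 0 := by
  classical
  have h : ∀ z ∈ B.erase y, ∃ p : MvPolynomial (Fin r) K, eval y p = 1 ∧ eval z p = 0 := by
    intro z hz
    obtain ⟨j, hj⟩ := Function.ne_iff.mp (Finset.ne_of_mem_erase hz)
    refine ⟨C (y j - z j)⁻¹ * (X j - C (z j)), ?_, ?_⟩
    · have : y j - z j ≠ 0 := sub_ne_zero.mpr hj.symm
      simp [inv_mul_cancel₀ this]
    · simp
  choose p hp1 hp0 using h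
  refine ⟨∏ z ∈ (B.erase y).attach, p z z.2, ?_, ?_⟩
  · rw [map_prod]
    simp [hp1]
  · intro z hz hzy
    rw [map_prod]
    exact Finset.prod_eq_zero
      (Finset.mem_attach _ ⟨z, Finset.mem_erase.mpr ⟨hzy, hz⟩⟩) (hp0 _ _)

lemma eval_shift (K : Type*) [CommRing K] {r : ℕ} (β : Fin r →₀ ℕ) (x : Fin r → K)
    (f : MvPolynomial (Fin r) K) :
    eval x ((aeval fun j : Fin r => X j - C ((β j : K))) f) =
      eval (fun j => x j - (β j : K)) f := by
  have : (aeval x : MvPolynomial (Fin r) K →ₐ[K] K)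
      ((aeval fun j : Fin r => X j - C ((β j : K))) f) =
      aeval (fun j : Fin r => (aeval x : MvPolynomial (Fin r) K →ₐ[K] K)
        (X j - C ((β j : K)))) f := comp_aeval_apply _ _ _
  rw [show (fun j : Fin r => (aeval x : MvPolynomial (Fin r) K →ₐ[K] K)
      (X j - C ((β j : K)))) = fun j => x j - (β j : K) from funext fun j => by simp] at this
  exact this

/-- The operator `E_{α,β} : f(s) ↦ s^α · f(s - β)` on `K[s_1, …, s_r]`:
first apply the iterated shift operators, then multiply by the monomial `s^α`. -/
noncomputable def shiftAlgOp (K : Type*) [CommRing K] (r : ℕ) (α β : Fin r →₀ ℕ) :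
    Module.End K (MvPolynomial (Fin r) K) :=
  (LinearMap.mulLeft K (monomial α (1 : K))) ∘ₗ shiftPow K r β

/-- Over a field of characteristic zero, the operators
`f(s) ↦ s^α · f(s - β)` on the polynomial ring `K[s_1, …, s_r]`, indexed by
pairs `(α, β)`, are linearly independent over `K`; i.e. the shift algebra
`S_r(K)` has a PBW basis realized faithfully as operators on polynomials. -/
theorem shift_operators_linearIndependent (K : Type*) [Field K] [CharZero K] (r : ℕ) :
    LinearIndependent K
      (fun p : (Fin r →₀ ℕ) × (Fin r →₀ ℕ) => shiftAlgOp K r p.1 p.2) := by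
  classical
  rw [linearIndependent_iff]
  intro l hl
  have h1 : ∀ (f : MvPolynomial (Fin r) K) (x : Fin r → K)
      (p : (Fin r →₀ ℕ) × (Fin r →₀ ℕ)),
      eval x (shiftAlgOp K r p.1 p.2 f) =
        eval x (monomial p.1 (1:K)) * eval (fun j => x j - (p.2 j : K)) f := by
    intro f x p
    show eval x ((LinearMap.mulLeft K (monomial p.1 (1 : K)) ∘ₗ shiftPow K r p.2) f) = _
    rw [LinearMap.comp_apply, shiftPow_eq, LinearMap.mulLeft_apply, eval_mul,
      AlgHom.toLinearMap_apply, eval_shift]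
  have key : ∀ (f : MvPolynomial (Fin r) K) (x : Fin r → K),
      ∑ p ∈ l.support, l p * (eval x (monomial p.1 (1:K)) *
        eval (fun j => x j - (p.2 j : K)) f) = 0 := by
    intro f x
    have h0 := congrArg (fun T : Module.End K (MvPolynomial (Fin r) K) => eval x (T f)) hl
    simp only [Finsupp.linearCombination_apply, Finsupp.sum, LinearMap.coe_sum,
      Finset.sum_apply, LinearMap.smul_apply, map_sum, MvPolynomial.smul_eval,
      LinearMap.zero_apply, map_zero] at h0
    rw [← h0]
    exact Finset.sum_congr rfl fun p _ => by rw [h1]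
  have hcoeff : ∀ p0 ∈ l.support, l p0 = 0 := by
    intro p0 hp0
    have hx : ∀ x : Fin r → K,
        eval x (∑ p ∈ l.support.filter (fun p => p.2 = p0.2),
          l p • monomial p.1 (1:K)) = 0 := by
      intro x
      set y : Fin r → K := fun j => x j - (p0.2 j : K) with hy
      obtain ⟨q, hq1, hq0⟩ := exists_indicator K
        (l.support.image fun p => fun j => x j - (p.2 j : K)) y
      have hk := key q x
      have hterm : ∀ p ∈ l.support,
          l p * (eval x (monomial p.1 (1:K)) * eval (fun j => x j - (p.2 j : K)) q) =
          if p.2 = p0.2 then l p * eval x (monomial p.1 (1:K)) else 0 := by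
        intro p hp
        by_cases h : p.2 = p0.2
        · rw [if_pos h, h]
          rw [show (fun j => x j - ((p0.2 : Fin r →₀ ℕ) j : K)) = y from rfl, hq1, mul_one]
        · rw [if_neg h]
          have hne : (fun j => x j - ((p.2 : Fin r →₀ ℕ) j : K)) ≠ y := by
            intro hEq
            refine h (Finsupp.ext fun j => ?_)
            have h2 := congrFun hEq j
            simp only [hy] at h2
            exact_mod_cast sub_right_inj.mp h2
          rw [hq0 _ (Finset.mem_image_of_mem _ hp) hne, mul_zero, mul_zero]
      rw [Finset.sum_congr rfl hterm] at hk
      rw [map_sum]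
      simp only [MvPolynomial.smul_eval]
      rw [Finset.sum_filter]
      exact hk
    have hQ : (∑ p ∈ l.support.filter (fun p => p.2 = p0.2),
        l p • monomial p.1 (1:K)) = 0 :=
      MvPolynomial.funext fun x => by rw [hx x, map_zero]
    have hsum : ∑ p ∈ l.support.filter (fun p => p.2 = p0.2),
        (if p.1 = p0.1 then l p else 0) = l p0 := by
      rw [Finset.sum_eq_single p0]
      · simp
      · intro p hp hne
        rw [Finset.mem_filter] at hp
        rw [if_neg]
        intro hcontra
        exact hne (Prod.ext hcontra hp.2)
      · intro h
        exact absurd (Finset.mem_filter.mpr ⟨hp0, rfl⟩ :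
          p0 ∈ l.support.filter (fun p => p.2 = p0.2)) h
    have hc : coeff p0.1 (∑ p ∈ l.support.filter (fun p => p.2 = p0.2),
        l p • monomial p.1 (1:K)) = l p0 := by
      rw [MvPolynomial.coeff_sum, ← hsum]
      refine Finset.sum_congr rfl fun p _ => ?_
      rw [MvPolynomial.coeff_smul, coeff_monomial]
      split <;> simp
    rw [hQ, coeff_zero] at hc
    exact hc.symm
  ext p
  by_cases h : p ∈ l.support
  · exact hcoeff p h
  · exact Finsupp.notMem_support_iff.mp h
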